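/- arXiv:2407.09666 — 4 statements merged into one kernel-verified Lean document; each statement's English description precedes it below -/
import Mathlib

section
/- Let A be a (not necessarily unital) associative algebra satisfying a_1⋯a_n = a_{σ(1)}⋯a_{σ(n)} for some σ ∈ S_n with σ(1) ≠ 1. Then A satisfies the degree-(n+2) identity corresponding to the transposition (1 2): for all a_1,...,a_{n+2} ∈ A, a_1 a_2 a_3 ⋯ a_{n+2} = a_2 a_1 a_3 ⋯ a_{n+2}. -/
/-!
Let `t = σ⁻¹ 0`, so `t ≠ 0`. The identity lets a left factor of the `t`-th letter of a word of
length `n + 1` jump to the front: `b₀ ⋯ (y bₜ) ⋯ bₙ = y b₀ ⋯ bₙ`. Hence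
`x y z₀ ⋯ zₙ = z₀ ⋯ (x y zₜ) ⋯ zₙ`. Since `t ≥ 1`, the `x` can be moved onto `zₜ₋₁` as a right
factor, after which `y` alone jumps out, leaving `y z₀ ⋯ (x zₜ) ⋯ zₙ = y x z₀ ⋯ zₙ`.
-/
/-- Product of a nonempty list in a (non-unital) multiplicative structure;
junk value `0` for the empty list. -/
def listMul {A : Type*} [Mul A] [Zero A] : List A → A
  | [] => 0
  | [x] => x
  | x :: y :: l => x * listMul (y :: l)

/-- The product `a 0 * a 1 * ⋯ * a (k-1)`. -/
def finProd {A : Type*} [Mul A] [Zero A] {k : ℕ} (a : Fin k → A) : A :=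
  listMul (List.ofFn a)

open Function

section Semigroup

variable {A : Type*} [Semigroup A] [Zero A]

theorem finProd_cons {k : ℕ} (a : A) (b : Fin (k + 1) → A) :
    finProd (Fin.cons a b : Fin (k + 2) → A) = a * finProd b := by
  simp only [finProd, List.ofFn_succ, Fin.cons_zero, Fin.cons_succ]
  rfl

theorem finProd_update_zero_mul {k : ℕ} (b : Fin (k + 1) → A) (y : A) :
    finProd (update b 0 (y * b 0)) = y * finProd b := by
  cases k with
  | zero => rfl
  | succ k =>
    induction b using Fin.consCases
    simp only [Fin.cons_zero, Fin.update_cons_zero, finProd_cons, mul_assoc]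

theorem finProd_update_castSucc_mul {k : ℕ} (b : Fin (k + 2) → A) (i : Fin (k + 1)) (x : A) :
    finProd (update b i.castSucc (b i.castSucc * x)) =
      finProd (update b i.succ (x * b i.succ)) := by
  induction b using Fin.consCases with | cons a b
  cases i using Fin.cases with
  | zero =>
    rw [Fin.castSucc_zero, Fin.cons_zero, Fin.update_cons_zero, Fin.cons_succ, ← Fin.cons_update,
      finProd_cons, finProd_cons, finProd_update_zero_mul, mul_assoc]
  | succ i =>
    cases k with
    | zero => exact i.elim0
    | succ k =>
      rw [← Fin.succ_castSucc, Fin.cons_succ, Fin.cons_succ, ← Fin.cons_update, ← Fin.cons_update,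
        finProd_cons, finProd_cons, finProd_update_castSucc_mul b i x]

theorem finProd_succ {k : ℕ} (b : Fin (k + 2) → A) :
    finProd b = b 0 * finProd (fun i => b i.succ) := by
  rw [← finProd_cons, ← Fin.tail_def, Fin.cons_self_tail]

theorem finProd_update_symm_zero_mul {k : ℕ} (σ : Equiv.Perm (Fin (k + 1)))
    (hid : ∀ b : Fin (k + 1) → A, finProd b = finProd (fun i => b (σ i)))
    (b : Fin (k + 1) → A) (y : A) :
    finProd (update b (σ.symm 0) (y * b (σ.symm 0))) = y * finProd b := by
  calc finProd (update b (σ.symm 0) (y * b (σ.symm 0)))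
      = finProd (update (b ∘ σ.symm) 0 (y * (b ∘ σ.symm) 0) ∘ σ) := by
        rw [update_comp_equiv, comp_assoc, Equiv.symm_comp_self, comp_id]; rfl
    _ = finProd (update (b ∘ σ.symm) 0 (y * (b ∘ σ.symm) 0)) := (hid _).symm
    _ = y * finProd (b ∘ σ.symm) := finProd_update_zero_mul _ _
    _ = y * finProd b := by rw [hid (b ∘ σ.symm)]; simp

theorem mul_left_comm_finProd_of_update_mul {k : ℕ} (t : Fin (k + 1)) (ht : t ≠ 0)
    (hjump : ∀ (b : Fin (k + 1) → A) (y : A), finProd (update b t (y * b t)) = y * finProd b)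
    (x y : A) (z : Fin (k + 1) → A) :
    x * (y * finProd z) = y * (x * finProd z) := by
  obtain ⟨s, rfl⟩ := Fin.exists_succ_eq.mpr ht
  rcases k with _ | k
  · exact s.elim0
  have hne : s.castSucc ≠ s.succ := s.castSucc_lt_succ.ne
  set u := update z s.castSucc (z s.castSucc * x)
  set v := update z s.succ (y * z s.succ)
  have hvu : update v s.castSucc (v s.castSucc * x) = update u s.succ (y * u s.succ) := by
    simp only [u, v, update_of_ne hne, update_of_ne hne.symm, update_comm hne.symm]
  calc x * (y * finProd z)
      = x * finProd v := by rw [hjump]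
    _ = finProd (update v s.succ (x * v s.succ)) := (hjump v x).symm
    _ = finProd (update u s.succ (y * u s.succ)) := by rw [← finProd_update_castSucc_mul, hvu]
    _ = y * finProd u := hjump u y
    _ = y * finProd (update z s.succ (x * z s.succ)) := by rw [finProd_update_castSucc_mul]
    _ = y * (x * finProd z) := by rw [hjump]

end Semigroup

theorem swap12_identity_degree_plus_two_general {A : Type*} [NonUnitalRing A]
    (n : ℕ) (σ : Equiv.Perm (Fin (n + 1))) (hσ : σ 0 ≠ 0)
    (hid : ∀ b : Fin (n + 1) → A, finProd b = finProd (fun i => b (σ i))) :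
    ∀ a : Fin (n + 3) → A,
      finProd a = finProd (fun j => a (Equiv.swap (0 : Fin (n + 3)) 1 j)) := by
  intro a
  have ht : σ.symm 0 ≠ 0 := by rwa [ne_eq, Equiv.symm_apply_eq, eq_comm]
  have hfix (i : Fin (n + 1)) : Equiv.swap (0 : Fin (n + 3)) 1 i.succ.succ = i.succ.succ :=
    Equiv.swap_apply_of_ne_of_ne (Fin.succ_ne_zero _) (Fin.succ_succ_ne_one _)
  rw [finProd_succ, finProd_succ, finProd_succ (fun j => _), finProd_succ]
  simp only [Fin.succ_zero_eq_one, Equiv.swap_apply_left, Equiv.swap_apply_right, hfix]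
  exact mul_left_comm_finProd_of_update_mul _ ht (finProd_update_symm_zero_mul σ hid) _ _ _

theorem swap12_identity_degree_plus_two {F A : Type*} [Field F] [NonUnitalRing A] [Module F A]
    [SMulCommClass F A A] [IsScalarTower F A A]
    (n : ℕ) (σ : Equiv.Perm (Fin (n + 1))) (hσ : σ 0 ≠ 0)
    (hid : ∀ b : Fin (n + 1) → A, finProd b = finProd (fun i => b (σ i))) :
    ∀ a : Fin (n + 3) → A,
      finProd a = finProd (fun j => a (Equiv.swap (0 : Fin (n + 3)) 1 j)) :=
  swap12_identity_degree_plus_two_general n σ hσ hid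
end

section
/- Let A be a (not necessarily unital) associative algebra satisfying generalized commutativity of degree n: a_1 a_2 ⋯ a_n = a_n a_{n−1} ⋯ a_1 for all a_i ∈ A. Then for every even permutation τ ∈ S_{n+1} and all a_1,...,a_{n+1} ∈ A, a_1⋯a_{n+1} = a_{τ(1)}⋯a_{τ(n+1)}. -/
open Equiv Equiv.Perm Fin

theorem MonoidHom.ker_le_of_mul_mem {G : Type*} [Group G] (φ : G →* ℤˣ) {S : Set G}
    (hS : Submonoid.closure S = ⊤) (hφ : ∀ s ∈ S, φ s = -1) {H : Subgroup G}
    (hH : ∀ s ∈ S, ∀ t ∈ S, s * t ∈ H) : φ.ker ≤ H := by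
  suffices ∀ g, (φ g = 1 → g ∈ H) ∧ (φ g = -1 → ∀ s ∈ S, g * s ∈ H) from
    fun g hg => (this g).1 hg
  intro g
  induction (hS ▸ Submonoid.mem_top g : g ∈ Submonoid.closure S)
    using Submonoid.closure_induction_right with
  | one => exact ⟨fun _ => H.one_mem, fun h => absurd h (by simp)⟩
  | mul_right g _ t ht ih =>
    rw [map_mul, hφ t ht]
    rcases Int.units_eq_one_or (φ g) with hg | hg <;> rw [hg]
    · refine ⟨fun h => absurd h (by decide), fun _ s hs => ?_⟩
      rw [mul_assoc]
      exact H.mul_mem (ih.1 hg) (hH t ht s hs)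
    · exact ⟨fun _ => ih.2 hg t ht, fun h => absurd h (by decide)⟩

theorem Fin.partialProd_last {M : Type*} [Monoid M] {n : ℕ} (f : Fin n → M) :
    partialProd f (last n) = (List.ofFn f).prod := by
  simp [partialProd, List.take_of_length_le]

section Semigroup

variable {A : Type*} [Semigroup A] [Zero A]

theorem WithOne.coe_listMul {l : List A} (hl : l ≠ []) :
    ((listMul l : A) : WithOne A) = (l.map (↑)).prod := by
  induction l with
  | nil => exact absurd rfl hl
  | cons x t ih =>
    cases t with
    | nil => simp [listMul]
    | cons y t => simp [listMul, ih]

theorem WithOne.coe_finProd {k : ℕ} (a : Fin (k + 1) → A) :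
    ((finProd a : A) : WithOne A) = (List.ofFn fun i => (a i : WithOne A)).prod := by
  rw [finProd, coe_listMul (by simp), List.map_ofFn]
  rfl

theorem finProd_contractNth {n : ℕ} (b : Fin (n + 2) → A) (p : Fin (n + 1)) :
    finProd (contractNth p.castSucc (· * ·) b) = finProd b := by
  apply WithOne.coe_injective
  have h := congrFun (partialProd_contractNth (fun i => (b i : WithOne A)) p.castSucc) (last _)
  have hlast : p.castSucc.succ.succAbove (last (n + 1)) = last (n + 2) :=
    succAbove_of_le_castSucc _ _ (by simp [Fin.le_def]; omega)
  rw [Function.comp_apply, hlast, partialProd_last, partialProd_last] at h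
  rw [WithOne.coe_finProd, WithOne.coe_finProd, ← h]
  exact congrArg (fun f => (List.ofFn f).prod) (comp_contractNth _ _ WithOne.coe_mul _ _)

end Semigroup

theorem contractNth_comp_revPerm_mul_swap {α : Type*} {n : ℕ} (op : α → α → α)
    (b : Fin (n + 2) → α) (p : Fin (n + 1)) :
    contractNth p.castSucc op (b ∘ (revPerm * swap p.castSucc p.succ : Perm (Fin (n + 2)))) =
      contractNth p.rev.castSucc op b ∘ rev := by
  ext k
  rcases lt_trichotomy k p with h | rfl | h
  · have h' : p.rev < k.rev := rev_lt_rev.2 h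
    rw [Function.comp_apply, contractNth_apply_of_lt _ _ _ _ h, contractNth_apply_of_gt _ _ _ _ h',
      Function.comp_apply, Perm.mul_apply, swap_apply_of_ne_of_ne (castSucc_lt_castSucc_iff.2 h).ne
      (castSucc_lt_succ_iff.2 h.le).ne, revPerm_apply, rev_castSucc]
  · rw [Function.comp_apply, contractNth_apply_of_eq _ _ _ _ rfl,
      contractNth_apply_of_eq _ _ _ _ rfl]
    simp [rev_castSucc, rev_succ]
  · have h' : k.rev < p.rev := rev_lt_rev.2 h
    rw [Function.comp_apply, contractNth_apply_of_gt _ _ _ _ h, contractNth_apply_of_lt _ _ _ _ h',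
      Function.comp_apply, Perm.mul_apply, swap_apply_of_ne_of_ne (castSucc_lt_succ_iff.2 h.le).ne'
      (succ_lt_succ_iff.2 h).ne', revPerm_apply, rev_succ]

def finProdStabilizer (A : Type*) [Mul A] [Zero A] (k : ℕ) : Subgroup (Perm (Fin k)) where
  carrier := {σ | ∀ a : Fin k → A, finProd (a ∘ σ) = finProd a}
  one_mem' _ := rfl
  mul_mem' {σ τ} hσ hτ a := (hτ (a ∘ σ)).trans (hσ a)
  inv_mem' {σ} hσ a := by simpa [Function.comp_assoc] using (hσ (a ∘ ⇑σ⁻¹)).symm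

theorem revPerm_mul_swap_mem_finProdStabilizer {A : Type*} [Semigroup A] [Zero A] {n : ℕ}
    (hrev : ∀ a : Fin (n + 1) → A, finProd a = finProd (fun i => a (Fin.revPerm i)))
    (p : Fin (n + 1)) :
    revPerm * swap p.castSucc p.succ ∈ finProdStabilizer A (n + 2) := fun b => by
  rw [← finProd_contractNth _ p, contractNth_comp_revPerm_mul_swap,
    ← finProd_contractNth b p.rev]
  exact (hrev _).symm

theorem generalized_commutative_even_perms_general {A : Type*} [NonUnitalRing A]
    (n : ℕ)
    (hrev : ∀ a : Fin (n + 1) → A, finProd a = finProd (fun i => a (Fin.revPerm i)))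
    (τ : Equiv.Perm (Fin (n + 2))) (hτ : Equiv.Perm.sign τ = 1) :
    ∀ a : Fin (n + 2) → A, finProd a = finProd (fun i => a (τ i)) := by
  have hgen := revPerm_mul_swap_mem_finProdStabilizer hrev
  have hτ : τ ∈ finProdStabilizer A (n + 2) := by
    refine MonoidHom.ker_le_of_mul_mem sign (mclosure_swap_castSucc_succ (n + 1)) ?_ ?_ hτ
    · rintro _ ⟨p, rfl⟩
      exact sign_swap (castSucc_lt_succ (i := p)).ne
    · rintro _ ⟨p, rfl⟩ _ ⟨q, rfl⟩
      simpa [mul_assoc] using mul_mem (inv_mem (hgen p)) (hgen q)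
  exact fun a => (hτ a).symm

theorem generalized_commutative_even_perms {F A : Type*} [Field F] [NonUnitalRing A] [Module F A]
    [SMulCommClass F A A] [IsScalarTower F A A]
    (n : ℕ)
    (hrev : ∀ a : Fin (n + 1) → A, finProd a = finProd (fun i => a (Fin.revPerm i)))
    (τ : Equiv.Perm (Fin (n + 2))) (hτ : Equiv.Perm.sign τ = 1) :
    ∀ a : Fin (n + 2) → A, finProd a = finProd (fun i => a (τ i)) :=
  generalized_commutative_even_perms_general n hrev τ hτ
end

section
/- Let A be a (not necessarily unital) associative algebra satisfying, for all even permutations σ ∈ S_k (k ≥ 3), the identity a_1⋯a_k = a_{σ(1)}⋯a_{σ(k)}. If in addition A satisfies a_1⋯a_k = a_{ν(1)}⋯a_{ν(k)} for at least one odd permutation ν ∈ S_k, then A satisfies this identity for all permutations in S_k; otherwise A satisfies a_1⋯a_{k+1} = a_{τ(1)}⋯a_{τ(k+1)} for all τ ∈ S_{k+1}. -/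
/-!
The permutations giving identities of `A` in `n` letters form a subgroup `H_n` of `S_n`. If `H_k`
contains `A_k` and one odd permutation, it is all of `S_k`. For `k + 1` letters, an identity of
`H_k` applied to the last `k` letters puts into `H_{k+1}` every even permutation fixing `0`, and
applied to a word whose second letter is a product `x₁ x₂` it yields the odd 4-cycle
`x₀ x₁ x₂ x₃ ↦ x₁ x₂ x₃ x₀`. The square of that cycle is even and moves `0`; as `A_{k+1}` acts
primitively, the stabilizer of `0` is maximal in it, so `A_{k+1} ≤ H_{k+1}`, and the odd 4-cycle
then gives `H_{k+1} = S_{k+1}`.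
-/

open Equiv Equiv.Perm MulAction

section Products

variable {A : Type*}

lemma listMul_cons_of_ne_nil [Mul A] [Zero A] (x : A) {l : List A} (hl : l ≠ []) :
    listMul (x :: l) = x * listMul l := by
  cases l with
  | nil => exact absurd rfl hl
  | cons y l => rfl

lemma listMul_cons_cons [Semigroup A] [Zero A] (x y : A) (l : List A) :
    listMul (x :: y :: l) = listMul (x * y :: l) := by
  cases l with
  | nil => rfl
  | cons z l => exact (mul_assoc x y _).symm

lemma finProd_cons_s16 [Mul A] [Zero A] {n : ℕ} [NeZero n] (x : A) (w : Fin n → A) :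
    finProd (Fin.cons x w : Fin (n + 1) → A) = x * finProd w := by
  rw [finProd, List.ofFn_cons, listMul_cons_of_ne_nil x (by simp [NeZero.ne n])]
  rfl

lemma finProd_cons_cons [Semigroup A] [Zero A] {n : ℕ} (x y : A) (w : Fin n → A) :
    finProd (Fin.cons x (Fin.cons y w) : Fin (n + 2) → A) =
      finProd (Fin.cons (x * y) w : Fin (n + 1) → A) := by
  simp only [finProd, List.ofFn_cons, listMul_cons_cons]

end Products

def identityPerms (A : Type*) [Mul A] [Zero A] (n : ℕ) : Subgroup (Perm (Fin n)) where
  carrier := {σ | ∀ a : Fin n → A, finProd a = finProd (a ∘ σ)}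
  mul_mem' hσ hτ a := (hσ a).trans (hτ _)
  one_mem' _ := rfl
  inv_mem' {σ} hσ a := by simpa [Function.comp_assoc] using (hσ (a ∘ ⇑σ⁻¹)).symm

section PermGroups

variable {α : Type*} [Fintype α] [DecidableEq α] {H : Subgroup (Perm α)}

lemma eq_top_of_alternatingGroup_le (hA : alternatingGroup α ≤ H) {ν : Perm α} (hνH : ν ∈ H)
    (hν : sign ν = -1) : H = ⊤ := by
  refine eq_top_iff.mpr fun τ _ => ?_
  rcases Int.units_eq_one_or (sign τ) with hτ | hτ
  · exact hA (mem_alternatingGroup.mpr hτ)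
  · have hντ : ν⁻¹ * τ ∈ alternatingGroup α := by
      rw [mem_alternatingGroup, map_mul, map_inv, hν, hτ]; rfl
    simpa using H.mul_mem hνH (hA hντ)

lemma alternatingGroup_le_of_stabilizer_le (h3 : 3 ≤ Nat.card α) (x : α)
    (hstab : ∀ g ∈ alternatingGroup α, g x = x → g ∈ H) {g : Perm α}
    (hgA : g ∈ alternatingGroup α) (hgx : g x ≠ x) (hgH : g ∈ H) :
    alternatingGroup α ≤ H := by
  have : Nontrivial α := Finite.one_lt_card_iff_nontrivial.mp (by omega)
  have := alternatingGroup.isPreprimitive_of_three_le_card α h3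
  have hmax := IsPreprimitive.isCoatom_stabilizer_of_isPreprimitive (alternatingGroup α) x
  rw [← Subgroup.subgroupOf_eq_top]
  refine hmax.2 _ (SetLike.lt_iff_le_and_exists.mpr ⟨fun h hh => hstab h h.2 hh, ⟨g, hgA⟩, hgH, hgx⟩)

end PermGroups

section Identities

variable {A : Type*}

lemma cons_comp_decomposeFin_symm_zero {α : Type*} {n : ℕ} (x : α) (w : Fin n → α)
    (σ : Perm (Fin n)) :
    (Fin.cons x w : Fin (n + 1) → α) ∘ decomposeFin.symm (0, σ) = Fin.cons x (w ∘ σ) := by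
  ext i
  cases i using Fin.cases <;> simp [decomposeFin_symm_apply_succ]

lemma decomposeFin_symm_zero_mem_identityPerms [Mul A] [Zero A] {n : ℕ} [NeZero n]
    {σ : Perm (Fin n)} (hσ : σ ∈ identityPerms A n) :
    decomposeFin.symm (0, σ) ∈ identityPerms A (n + 1) := by
  intro a
  rw [← Fin.cons_self_tail a, cons_comp_decomposeFin_symm_zero, finProd_cons_s16, finProd_cons_s16,
    hσ (Fin.tail a)]

lemma mem_identityPerms_of_apply_zero [Mul A] [Zero A] {n : ℕ} [NeZero n]
    (heven : alternatingGroup (Fin n) ≤ identityPerms A n) {g : Perm (Fin (n + 1))}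
    (hgA : g ∈ alternatingGroup (Fin (n + 1))) (hg0 : g 0 = 0) : g ∈ identityPerms A (n + 1) := by
  rcases hdec : decomposeFin g with ⟨p, σ⟩
  have hg : g = decomposeFin.symm (p, σ) := by rw [← hdec, Equiv.symm_apply_apply]
  obtain rfl : p = 0 := by rw [← hg0, hg, decomposeFin_symm_apply_zero]
  rw [hg, mem_alternatingGroup, decomposeFin.symm_sign, if_pos rfl, one_mul] at hgA
  exact hg ▸ decomposeFin_symm_zero_mem_identityPerms (heven (mem_alternatingGroup.mpr hgA))

/-- Merging `x₁ x₂` into one letter turns the even 3-cycle `cycleRange 2` on `m + 3` letters into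
the odd 4-cycle `cycleRange 3` on `m + 4` letters. -/
lemma cycleRange_three_mem_identityPerms [Semigroup A] [Zero A] {m : ℕ}
    (heven : alternatingGroup (Fin (m + 3)) ≤ identityPerms A (m + 3)) :
    Fin.cycleRange (3 : Fin (m + 4)) ∈ identityPerms A (m + 4) := by
  have hc2 : Fin.cycleRange (2 : Fin (m + 3)) ∈ identityPerms A (m + 3) :=
    heven Fin.isThreeCycle_cycleRange_two.mem_alternatingGroup
  have h3 : (3 : Fin (m + 4)) = (2 : Fin (m + 3)).succ := by ext; simp [Nat.mod_eq_of_lt]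
  intro a
  refine Fin.consCases (fun x₀ a => ?_) a
  refine Fin.consCases (fun x₁ a => ?_) a
  refine Fin.consCases (fun x₂ a => ?_) a
  refine Fin.consCases (fun x₃ w => ?_) a
  calc finProd (Fin.cons x₀ (Fin.cons x₁ (Fin.cons x₂ (Fin.cons x₃ w))) : Fin (m + 4) → A)
      = finProd (Fin.cons x₀ (Fin.cons (x₁ * x₂) (Fin.cons x₃ w)) : Fin (m + 3) → A) := by
        rw [finProd_cons_s16 x₀, finProd_cons_s16 x₀, finProd_cons_cons x₁ x₂]
    _ = finProd (Fin.cons (x₁ * x₂) (Fin.cons x₃ (Fin.cons x₀ w)) : Fin (m + 3) → A) := by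
        rw [hc2 _, Fin.cons_comp_cycleRange, ← Fin.succ_one_eq_two, Fin.insertNth_succ_cons,
          ← Fin.succ_zero_eq_one, Fin.insertNth_succ_cons, Fin.insertNth_zero']
    _ = _ := by
        rw [← finProd_cons_cons, Fin.cons_comp_cycleRange, h3, ← Fin.succ_one_eq_two,
          ← Fin.succ_zero_eq_one, Fin.insertNth_succ_cons, Fin.insertNth_succ_cons,
          Fin.insertNth_succ_cons, Fin.insertNth_zero']

lemma identityPerms_succ_eq_top [Semigroup A] [Zero A] {n : ℕ} (hn : 3 ≤ n)
    (heven : alternatingGroup (Fin n) ≤ identityPerms A n) : identityPerms A (n + 1) = ⊤ := by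
  obtain ⟨m, rfl⟩ : ∃ m, n = m + 3 := ⟨n - 3, by omega⟩
  set c := Fin.cycleRange (3 : Fin (m + 4))
  have hcH : c ∈ identityPerms A (m + 4) := cycleRange_three_mem_identityPerms heven
  have h3 : 3 % (m + 4) = 3 := Nat.mod_eq_of_lt (by omega)
  have hc : sign c = -1 := by
    rw [Fin.sign_cycleRange]
    simp [h3]
    decide
  have hc0 : (c * c) 0 ≠ 0 := by
    have h0 : (c 0 : ℕ) = 1 := Fin.coe_cycleRange_of_lt (by simp [Fin.lt_def, h3])
    have h1 : (c (c 0) : ℕ) = 2 := by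
      rw [Fin.coe_cycleRange_of_lt (by simp [Fin.lt_def, h0, h3]), h0]
    rw [Perm.mul_apply, ne_eq, Fin.ext_iff, h1]
    simp
  refine eq_top_of_alternatingGroup_le ?_ hcH hc
  refine alternatingGroup_le_of_stabilizer_le (by simp) 0
    (fun g hgA hg0 => mem_identityPerms_of_apply_zero heven hgA hg0) ?_ hc0 (mul_mem hcH hcH)
  simp [mem_alternatingGroup, hc]

end Identities

theorem even_perms_plus_one_odd_general {A : Type*} [NonUnitalRing A]
    (k : ℕ) (hk : 3 ≤ k)
    (heven : ∀ σ : Equiv.Perm (Fin k), Equiv.Perm.sign σ = 1 →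
      ∀ a : Fin k → A, finProd a = finProd (fun i => a (σ i))) :
    ((∃ ν : Equiv.Perm (Fin k), Equiv.Perm.sign ν = -1 ∧
        ∀ a : Fin k → A, finProd a = finProd (fun i => a (ν i))) →
      ∀ τ : Equiv.Perm (Fin k), ∀ a : Fin k → A,
        finProd a = finProd (fun i => a (τ i))) ∧
    ((¬∃ ν : Equiv.Perm (Fin k), Equiv.Perm.sign ν = -1 ∧
        ∀ a : Fin k → A, finProd a = finProd (fun i => a (ν i))) →
      ∀ τ : Equiv.Perm (Fin (k + 1)), ∀ a : Fin (k + 1) → A,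
        finProd a = finProd (fun i => a (τ i))) := by
  have hA : alternatingGroup (Fin k) ≤ identityPerms A k :=
    fun σ hσ => heven σ (mem_alternatingGroup.mp hσ)
  refine ⟨fun ⟨ν, hν, hνH⟩ τ => ?_, fun _ τ => ?_⟩
  · exact (Subgroup.eq_top_iff' _).mp (eq_top_of_alternatingGroup_le hA hνH hν) τ
  · exact (Subgroup.eq_top_iff' _).mp (identityPerms_succ_eq_top hk hA) τ

theorem even_perms_plus_one_odd {F A : Type*} [Field F] [NonUnitalRing A] [Module F A]
    [SMulCommClass F A A] [IsScalarTower F A A]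
    (k : ℕ) (hk : 3 ≤ k)
    (heven : ∀ σ : Equiv.Perm (Fin k), Equiv.Perm.sign σ = 1 →
      ∀ a : Fin k → A, finProd a = finProd (fun i => a (σ i))) :
    ((∃ ν : Equiv.Perm (Fin k), Equiv.Perm.sign ν = -1 ∧
        ∀ a : Fin k → A, finProd a = finProd (fun i => a (ν i))) →
      ∀ τ : Equiv.Perm (Fin k), ∀ a : Fin k → A,
        finProd a = finProd (fun i => a (τ i))) ∧
    ((¬∃ ν : Equiv.Perm (Fin k), Equiv.Perm.sign ν = -1 ∧
        ∀ a : Fin k → A, finProd a = finProd (fun i => a (ν i))) →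
      ∀ τ : Equiv.Perm (Fin (k + 1)), ∀ a : Fin (k + 1) → A,
        finProd a = finProd (fun i => a (τ i))) :=
  even_perms_plus_one_odd_general k hk heven
end

section
/- Let A be a (not necessarily unital) associative algebra over a field F satisfying the identity a_1⋯a_n = q · a_{σ(1)}⋯a_{σ(n)} for some scalar q ∈ F with q ≠ 1 and some permutation σ ∈ S_n. Then A is nilpotent: there exists N such that any product of N elements of A is zero. -/
/-!
If `σ = 1` the identity says `x = q • x` for every product `x` of `n` elements. Otherwise pick `t`
with `σ (t + 1) ≠ σ t + 1` and put `u = σ t`, `v = σ (t + 1)`. Substituting `a_u ↦ a_u x` or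
`a_v ↦ x a_v` yields the same right-hand side, because `a_u` and `a_v` are adjacent there; so in
any word of `n` letters, a letter `x` inserted after the first `u + 1` letters or after the first
`v` letters gives the same product. Hence, flanked by `n` letters on each side, every letter
commutes past any `c = |u + 1 - v| > 0` letters. Now take a word `L B₁ ⋯ Bₙ R` whose blocks `Bᵢ`
have length `c`: the identity applied to the blocks turns it into `q • L B_{σ 1} ⋯ B_{σ n} R`, and
commuting the blocks back into place shows that its product equals `q` times itself, so it is `0`.
-/

theorem List.ofFn_update {α : Type*} {k : ℕ} (a : Fin k → α) (i : Fin k) (y : α) :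
    ofFn (Function.update a i y) = (ofFn a).set i y := by
  apply ext_getElem (by simp)
  intro j _ _
  simp [Function.update_apply, getElem_set, Fin.ext_iff, eq_comm]

lemma Equiv.Perm.exists_succ_ne_of_ne_one {n : ℕ} {σ : Equiv.Perm (Fin n)} (hσ : σ ≠ 1) :
    ∃ t, ∃ ht : t + 1 < n, (σ ⟨t + 1, ht⟩ : ℕ) ≠ σ ⟨t, by omega⟩ + 1 := by
  contrapose! hσ
  cases n with
  | zero => exact Subsingleton.elim _ _
  | succ m =>
    have hmono : StrictMono σ := Fin.strictMono_iff_lt_succ.2 fun i => by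
      have := hσ i i.succ.isLt
      change (σ ⟨i, _⟩ : ℕ) < σ ⟨i + 1, _⟩
      omega
    ext i
    exact congrArg (fun e : Fin (m + 1) ≃o Fin (m + 1) => (e i : ℕ))
      (Subsingleton.elim (hmono.orderIsoOfSurjective σ σ.surjective) (OrderIso.refl _))

lemma eq_zero_of_eq_smul_self {K M : Type*} [DivisionRing K] [AddCommGroup M] [Module K M] {q : K}
    (hq : q ≠ 1) {x : M} (h : x = q • x) : x = 0 := by
  have : (1 - q) • x = 0 := by rw [sub_smul, one_smul, ← h, sub_self]
  exact (smul_eq_zero.mp this).resolve_left (sub_ne_zero.mpr hq.symm)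

open List

/-- Products of words are computed in the unitization, so that concatenation is multiplicative
without any nonemptiness side conditions. -/
noncomputable def wordProd (F : Type*) {A : Type*} [CommRing F] [NonUnitalRing A] [Module F A]
    (w : List A) : Unitization F A :=
  (w.map (↑)).prod

section Words

variable {F A : Type*} [CommRing F] [NonUnitalRing A] [Module F A]

@[simp] lemma wordProd_nil : wordProd F ([] : List A) = 1 := rfl

@[simp] lemma wordProd_cons (a : A) (w : List A) :
    wordProd F (a :: w) = a * wordProd F w := prod_cons

lemma wordProd_ofFn {k : ℕ} (a : Fin k → A) :
    wordProd F (ofFn a) = (ofFn fun i => (a i : Unitization F A)).prod := by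
  rw [wordProd, map_ofFn]
  rfl

lemma wordProd_drop (W : List A) {i : ℕ} (hi : i < W.length) :
    wordProd F (W.drop i) = W[i] * wordProd F (W.drop (i + 1)) := by
  rw [drop_eq_getElem_cons hi, wordProd_cons]

lemma coe_listMul : ∀ {w : List A}, w ≠ [] → ((listMul w : A) : Unitization F A) = wordProd F w
  | [a], _ => by simp [listMul, wordProd]
  | a :: b :: w, _ => by
    rw [listMul.eq_3, Unitization.inr_mul, coe_listMul (cons_ne_nil b w), wordProd_cons a]

lemma coe_finProd {k : ℕ} [NeZero k] (a : Fin k → A) :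
    ((finProd a : A) : Unitization F A) = wordProd F (ofFn a) :=
  coe_listMul (by simp [NeZero.ne])

variable (A) in
def QIdentity {n : ℕ} (q : F) (σ : Equiv.Perm (Fin n)) : Prop :=
  ∀ a : Fin n → A, wordProd F (ofFn a) = q • wordProd F (ofFn (a ∘ σ))

lemma qIdentity_of_finProd {n : ℕ} [NeZero n] {q : F} {σ : Equiv.Perm (Fin n)}
    (hid : ∀ a : Fin n → A, finProd a = q • finProd (fun i => a (σ i))) :
    QIdentity A q σ := fun a => by
  rw [← coe_finProd, ← coe_finProd, hid, Unitization.inr_smul]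
  rfl

variable (F A) in
def InsertionEquiv (n p p' : ℕ) : Prop :=
  ∀ W : List A, W.length = n → ∀ x : A,
    wordProd F (W.take p) * x * wordProd F (W.drop p) =
      wordProd F (W.take p') * x * wordProd F (W.drop p')

lemma InsertionEquiv.symm {n p p' : ℕ} (h : InsertionEquiv F A n p p') :
    InsertionEquiv F A n p' p :=
  fun W hW x => (h W hW x).symm

variable (F A) in
def CommutesInContext (n c : ℕ) : Prop :=
  ∀ L D R : List A, n ≤ L.length → D.length = c → n ≤ R.length → ∀ x : A,
    wordProd F L * x * wordProd F D * wordProd F R = wordProd F L * wordProd F D * x * wordProd F R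

variable [IsScalarTower F A A] [SMulCommClass F A A]

@[simp] lemma wordProd_append (v w : List A) :
    wordProd F (v ++ w) = wordProd F v * wordProd F w := by
  simp [wordProd]

lemma wordProd_flatten (B : List (List A)) :
    wordProd F B.flatten = (B.map (wordProd F)).prod := by
  induction B with
  | nil => simp
  | cons w B ih => simp [ih]

lemma wordProd_ofFn_update {k : ℕ} (w : Fin k → A) (i : Fin k) (y : A) :
    wordProd F (ofFn (Function.update w i y)) =
      wordProd F ((ofFn w).take i) * y * wordProd F ((ofFn w).drop (i + 1)) := by
  simp [ofFn_update, wordProd, prod_set]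

lemma wordProd_take_succ (W : List A) {i : ℕ} (hi : i < W.length) :
    wordProd F (W.take (i + 1)) = wordProd F (W.take i) * W[i] := by
  rw [take_add_one, getElem?_eq_getElem hi, Option.toList_some, wordProd_append, wordProd_cons,
    wordProd_nil, mul_one]

lemma InsertionEquiv.commutesInContext {n p p' : ℕ} (h : InsertionEquiv F A n p p')
    (hp : p' ≤ p) (hpn : p ≤ n) : CommutesInContext F A n (p - p') := by
  intro L D R hL hD hR x
  obtain ⟨L₁, L₂, rfl, hL₂⟩ : ∃ L₁ L₂ : List A, L = L₁ ++ L₂ ∧ L₂.length = p' :=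
    ⟨L.take (L.length - p'), L.drop (L.length - p'), (take_append_drop _ _).symm, by simp; omega⟩
  obtain ⟨R₁, R₂, rfl, hR₁⟩ : ∃ R₁ R₂ : List A, R = R₁ ++ R₂ ∧ R₁.length = n - p :=
    ⟨R.take (n - p), R.drop (n - p), (take_append_drop _ _).symm, by simp; omega⟩
  have hW := h (L₂ ++ D ++ R₁) (by simp; omega) x
  rw [take_left' (by simp; omega), drop_left' (by simp; omega), append_assoc,
    take_left' hL₂, drop_left' hL₂] at hW
  have := congrArg (fun y => wordProd F L₁ * y * wordProd F R₂) hW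
  simpa only [wordProd_append, mul_assoc] using this.symm

lemma InsertionEquiv.exists_commutesInContext {n p p' : ℕ} (h : InsertionEquiv F A n p p')
    (hne : p ≠ p') (hp : p ≤ n) (hp' : p' ≤ n) : ∃ c, 0 < c ∧ CommutesInContext F A n c := by
  rcases hne.lt_or_gt with hlt | hlt
  · exact ⟨p' - p, by omega, h.symm.commutesInContext hlt.le hp'⟩
  · exact ⟨p - p', by omega, h.commutesInContext hlt.le hp⟩

lemma CommutesInContext.wordProd_perm_flatten {n c : ℕ} (h : CommutesInContext F A n c)
    (hc : 0 < c) {B B' : List (List A)} (hB : B.Perm B') (hlen : ∀ X ∈ B, X.length = c)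
    (L R : List A) (hL : n ≤ L.length) (hR : n ≤ R.length) :
    wordProd F L * wordProd F B.flatten * wordProd F R =
      wordProd F L * wordProd F B'.flatten * wordProd F R := by
  induction hB generalizing L with
  | nil => rfl
  | cons X _ ih =>
    have := ih (fun Y hY => hlen Y (mem_cons_of_mem X hY)) (L ++ X) (by simp; omega)
    simpa only [flatten_cons, wordProd_append, mul_assoc] using this
  | swap X Y l =>
    have hY : Y ≠ [] := ne_nil_of_length_pos (by simp [hlen Y, hc])
    have := h L X (l.flatten ++ R) hL (hlen X (by simp)) (by simp; omega) (listMul Y)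
    simpa only [coe_listMul hY, flatten_cons, wordProd_append, mul_assoc] using this
  | trans h₁ _ ih₁ ih₂ =>
    rw [ih₁ hlen L hL, ih₂ (fun Y hY => hlen Y (h₁.symm.subset hY)) L hL]

namespace QIdentity

variable {n c : ℕ} {q : F} {σ : Equiv.Perm (Fin n)}

lemma wordProd_flatten (hid : QIdentity A q σ) (g : Fin n → List A) (hg : ∀ i, g i ≠ []) :
    wordProd F (ofFn g).flatten = q • wordProd F (ofFn (g ∘ σ)).flatten := by
  have key := hid (fun i => listMul (g i))
  simp only [wordProd_ofFn, Function.comp_def, coe_listMul (hg _)] at key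
  simpa only [_root_.wordProd_flatten, map_ofFn, Function.comp_def] using key

lemma insertionEquiv (hid : QIdentity A q σ) {t : ℕ} (ht : t + 1 < n) :
    InsertionEquiv F A n (σ ⟨t, by omega⟩ + 1) (σ ⟨t + 1, ht⟩) := by
  intro W hW x
  obtain ⟨w, rfl⟩ : ∃ w : Fin n → A, ofFn w = W := ⟨fun i => W[i], by simp [← hW]⟩
  set V := ofFn (w ∘ σ)
  have hV : t + 1 < V.length := by simpa [V]
  have hVt : V[t] = w (σ ⟨t, by omega⟩) := List.getElem_ofFn _
  have hVt' : V[t + 1] = w (σ ⟨t + 1, ht⟩) := List.getElem_ofFn _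
  have key : ∀ (i : Fin n) (y : A), wordProd F (ofFn (Function.update w (σ i) y)) =
      q • (wordProd F (V.take i) * y * wordProd F (V.drop (i + 1))) := by
    intro i y
    rw [hid, Function.update_comp_equiv, Equiv.symm_apply_apply, wordProd_ofFn_update]
  calc wordProd F ((ofFn w).take (σ ⟨t, by omega⟩ + 1)) * x *
        wordProd F ((ofFn w).drop (σ ⟨t, by omega⟩ + 1))
      = wordProd F (ofFn (Function.update w (σ ⟨t, by omega⟩) (w (σ ⟨t, by omega⟩) * x))) := by
        rw [wordProd_take_succ _ (by simp), wordProd_ofFn_update]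
        simp only [List.getElem_ofFn, Fin.eta, Unitization.inr_mul, mul_assoc]
    _ = q • (wordProd F (V.take (t + 1)) * ((x * w (σ ⟨t + 1, ht⟩) : A) : Unitization F A) *
          wordProd F (V.drop (t + 1 + 1))) := by
        rw [key ⟨t, by omega⟩, wordProd_take_succ V (i := t) (by omega), wordProd_drop V hV, hVt,
          hVt']
        simp only [Unitization.inr_mul, mul_assoc]
    _ = wordProd F (ofFn (Function.update w (σ ⟨t + 1, ht⟩) (x * w (σ ⟨t + 1, ht⟩)))) :=
        (key ⟨t + 1, ht⟩ _).symm
    _ = wordProd F ((ofFn w).take (σ ⟨t + 1, ht⟩)) * x *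
          wordProd F ((ofFn w).drop (σ ⟨t + 1, ht⟩)) := by
        rw [wordProd_ofFn_update, wordProd_drop (ofFn w) (i := σ ⟨t + 1, ht⟩) (by simp)]
        simp only [List.getElem_ofFn, Unitization.inr_mul, mul_assoc]

lemma exists_commutesInContext (hid : QIdentity A q σ) (hσ : σ ≠ 1) :
    ∃ c, 0 < c ∧ CommutesInContext F A n c := by
  obtain ⟨t, ht, hne⟩ := σ.exists_succ_ne_of_ne_one hσ
  exact (hid.insertionEquiv ht).exists_commutesInContext hne.symm (by omega) (by omega)

lemma wordProd_eq_smul_self (hid : QIdentity A q σ) (h : CommutesInContext F A n c)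
    (hc : 0 < c) (L R : List A) (hL : n ≤ L.length) (hR : n ≤ R.length)
    (g : Fin n → List A) (hg : ∀ i, (g i).length = c) :
    wordProd F (L ++ (ofFn g).flatten ++ R) = q • wordProd F (L ++ (ofFn g).flatten ++ R) := by
  have hne : ∀ i, g i ≠ [] := fun i => ne_nil_of_length_pos (by rw [hg]; exact hc)
  calc wordProd F (L ++ (ofFn g).flatten ++ R)
      = wordProd F L * (q • wordProd F (ofFn (g ∘ σ)).flatten) * wordProd F R := by
        rw [wordProd_append, wordProd_append, hid.wordProd_flatten g hne]
    _ = q • (wordProd F L * wordProd F (ofFn (g ∘ σ)).flatten * wordProd F R) := by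
        rw [mul_smul_comm, smul_mul_assoc]
    _ = q • wordProd F (L ++ (ofFn g).flatten ++ R) := by
        rw [h.wordProd_perm_flatten hc (σ.ofFn_comp_perm g) (by simp [hg]) L R hL hR,
          wordProd_append, wordProd_append]

lemma exists_forall_wordProd_eq_smul_self (hid : QIdentity A q σ) :
    ∃ N, n ≤ N ∧ ∀ a : Fin N → A, wordProd F (ofFn a) = q • wordProd F (ofFn a) := by
  by_cases hσ : σ = 1
  · exact ⟨n, le_rfl, fun a => by simpa [hσ] using hid a⟩
  obtain ⟨c, hc, h⟩ := hid.exists_commutesInContext hσ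
  refine ⟨n + n * c + n, by omega, fun a => ?_⟩
  rw [ofFn_add, ofFn_add, ofFn_mul]
  exact hid.wordProd_eq_smul_self h hc _ _ (by simp) (by simp) _ (by simp)

end QIdentity

end Words

theorem q_identity_nilpotent {F A : Type*} [Field F] [NonUnitalRing A] [Module F A]
    [SMulCommClass F A A] [IsScalarTower F A A]
    (n : ℕ) (hn : 0 < n) (q : F) (hq : q ≠ 1) (σ : Equiv.Perm (Fin n))
    (hid : ∀ a : Fin n → A, finProd a = q • finProd (fun i => a (σ i))) :
    ∃ N : ℕ, 0 < N ∧ ∀ a : Fin N → A, finProd a = 0 := by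
  have : NeZero n := ⟨hn.ne'⟩
  obtain ⟨N, hnN, h⟩ := (qIdentity_of_finProd (F := F) hid).exists_forall_wordProd_eq_smul_self
  refine ⟨N, by omega, fun a => ?_⟩
  have : NeZero N := ⟨by omega⟩
  apply Unitization.inr_injective (R := F)
  rw [coe_finProd, Unitization.inr_zero]
  exact eq_zero_of_eq_smul_self hq (h a)
end
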